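/- arXiv:1508.00991 — 5 statements merged into one kernel-verified Lean document; each statement's English description precedes it below -/
import Mathlib

section
/- Let Φ : (0,∞) → (0,∞) be an operator monotone function with Φ(1) = 1, and let w ∈ (0,1). If Φ'(1) = w, then for all t > 0 we have ((1-w) + w·t⁻¹)⁻¹ ≤ Φ(t) ≤ (1-w) + w·t. -/
/-
Testing operator monotonicity on `2 × 2` matrices gives a weak midpoint concavity,
`(f a + f b) / 2 ≤ f ((a + b) / 2 + δ)` for every `δ > 0`: compare the matrix with eigenvalues
`a, b` and eigenvectors `(1, 1), (1, -1)` with a diagonal matrix whose corner is `(a + b) / 2 + δ`,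
and read off the `(0, 0)` entries. Iterating this towards `1` and comparing with the derivative
at `1` puts `Φ` below its tangent line there, which is the upper bound. As `A ≤ B` implies
`B⁻¹ ≤ A⁻¹` for positive definite matrices, `t ↦ Φ(t⁻¹)⁻¹` is operator monotone as well, with the
same value and derivative at `1`; its tangent bound at `t⁻¹` is the lower bound.
-/

open Matrix
open scoped ComplexOrder

/-- `f` is operator monotone on `(0,∞)`: it preserves the Loewner order
on positive definite complex matrices of every size. -/
def OperatorMonotoneOn' (f : ℝ → ℝ) : Prop :=
  ∀ (n : ℕ) (A B : Matrix (Fin n) (Fin n) ℂ), A.PosDef → B.PosDef →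
    (B - A).PosSemidef → (cfc f B - cfc f A).PosSemidef

theorem add_slope_mul_sub (f : ℝ → ℝ) (p q : ℝ) : f q + slope f q p * (p - q) = f p := by
  simpa [mul_comm, add_comm] using sub_smul_slope_vadd f q p

open Polynomial in
theorem spectrum_subset_pair_of_mul_eq_zero {𝕜 A : Type*} [Field 𝕜] [Ring A] [Algebra 𝕜 A]
    [Nontrivial A] {a : A} {p q : 𝕜}
    (h : (a - algebraMap 𝕜 A p) * (a - algebraMap 𝕜 A q) = 0) : spectrum 𝕜 a ⊆ {p, q} := by
  intro r hr
  have hmem := spectrum.subset_polynomial_aeval a ((X - C p) * (X - C q)) ⟨r, hr, rfl⟩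
  simpa [h, sub_eq_zero] using hmem

theorem cfc_eq_of_spectrum_subset_pair {A : Type*} [Ring A] [StarRing A] [TopologicalSpace A]
    [Algebra ℝ A] [ContinuousFunctionalCalculus ℝ A IsSelfAdjoint] {a : A} (ha : IsSelfAdjoint a)
    {p q : ℝ} (hσ : spectrum ℝ a ⊆ {p, q}) (f : ℝ → ℝ) :
    cfc f a = algebraMap ℝ A (f q) + slope f q p • (a - algebraMap ℝ A q) := by
  have haffine : Set.EqOn f (fun t => f q + slope f q p * (t - q)) (spectrum ℝ a) := by
    intro t ht
    rcases hσ ht with rfl | rfl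
    · linarith [add_slope_mul_sub f t q]
    · simp
  rw [cfc_congr haffine, cfc_const_add (f q) _ a, cfc_const_mul (slope f q p) _ a,
    cfc_sub (fun t => t) (fun _ => q) a, cfc_id' ℝ a, cfc_const q a]

def realSym2 (a b d : ℝ) : Matrix (Fin 2) (Fin 2) ℂ := !![(a : ℂ), b; b, d]

section realSym2

variable {a b d : ℝ}

theorem realSym2_isHermitian : (realSym2 a b d).IsHermitian := by
  ext i j
  fin_cases i <;> fin_cases j <;> simp [realSym2]

theorem realSym2_sub (a' b' d' : ℝ) :
    realSym2 a b d - realSym2 a' b' d' = realSym2 (a - a') (b - b') (d - d') := by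
  ext i j
  fin_cases i <;> fin_cases j <;> simp [realSym2]

theorem spectrum_realSym2_subset {p q : ℝ} (hsum : p + q = a + d) (hprod : p * q = a * d - b ^ 2) :
    spectrum ℝ (realSym2 a b d) ⊆ {p, q} := by
  apply spectrum_subset_pair_of_mul_eq_zero
  have hsum' : (p : ℂ) + q = a + d := by exact_mod_cast hsum
  have hprod' : (p : ℂ) * q = a * d - b ^ 2 := by exact_mod_cast hprod
  ext i j
  fin_cases i <;> fin_cases j <;>
    simp only [realSym2, algebraMap_eq_diagonal, Matrix.mul_apply, Matrix.sub_apply,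
      Matrix.zero_apply, Fin.sum_univ_two, Fin.isValue, Fin.zero_eta, Fin.mk_one, of_apply,
      cons_val', cons_val_zero, cons_val_one, cons_val_fin_one, diagonal_apply_eq,
      diagonal_apply_ne, ne_eq, zero_ne_one, one_ne_zero, not_false_eq_true, sub_zero,
      Pi.algebraMap_apply, Complex.coe_algebraMap] <;> grind

theorem cfc_realSym2 {p q : ℝ} (hsum : p + q = a + d) (hprod : p * q = a * d - b ^ 2)
    (f : ℝ → ℝ) :
    cfc f (realSym2 a b d) = realSym2 (f q + slope f q p * (a - q)) (slope f q p * b)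
      (f q + slope f q p * (d - q)) := by
  rw [cfc_eq_of_spectrum_subset_pair realSym2_isHermitian.isSelfAdjoint
    (spectrum_realSym2_subset hsum hprod)]
  ext i j
  fin_cases i <;> fin_cases j <;>
    simp [realSym2, Matrix.algebraMap_eq_diagonal]

theorem realSym2_dotProduct_mulVec (v : Fin 2 → ℂ) :
    star v ⬝ᵥ realSym2 a b d *ᵥ v =
      ((a * ((v 0).re ^ 2 + (v 0).im ^ 2) + 2 * b * ((v 0).re * (v 1).re + (v 0).im * (v 1).im)
        + d * ((v 1).re ^ 2 + (v 1).im ^ 2) : ℝ) : ℂ) := by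
  apply Complex.ext <;>
    simp only [realSym2, dotProduct, mulVec, Fin.sum_univ_two, of_apply, cons_val', cons_val_zero,
      cons_val_one, cons_val_fin_one, Pi.star_apply, RCLike.star_def, Complex.add_re,
      Complex.add_im, Complex.mul_re, Complex.mul_im, Complex.conj_re, Complex.conj_im,
      Complex.ofReal_re, Complex.ofReal_im] <;>
    ring

theorem posSemidef_realSym2 (ha : 0 ≤ a) (hd : 0 ≤ d) (hb : b ^ 2 ≤ a * d) :
    (realSym2 a b d).PosSemidef := by
  refine .of_dotProduct_mulVec_nonneg realSym2_isHermitian.isSelfAdjoint fun v => ?_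
  rw [realSym2_dotProduct_mulVec, Complex.zero_le_real]
  rcases ha.eq_or_lt with rfl | ha
  · obtain rfl : b = 0 := by nlinarith
    simp only [zero_mul, mul_zero, zero_add]
    positivity
  · nlinarith [sq_nonneg (a * (v 0).re + b * (v 1).re), sq_nonneg (a * (v 0).im + b * (v 1).im),
      mul_nonneg (sub_nonneg.mpr hb) (add_nonneg (sq_nonneg (v 1).re) (sq_nonneg (v 1).im))]

theorem posDef_realSym2 (ha : 0 < a) (hb : b ^ 2 < a * d) : (realSym2 a b d).PosDef := by
  have hd : 0 < d := by nlinarith [sq_nonneg b]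
  refine (posSemidef_realSym2 ha.le hd.le hb.le).posDef_iff_det_ne_zero.mpr ?_
  rw [realSym2, det_fin_two_of]
  exact_mod_cast (by nlinarith : a * d - b * b ≠ 0)

end realSym2

theorem cfc_realSym2_diag (f : ℝ → ℝ) (p q : ℝ) :
    cfc f (realSym2 p 0 q) = realSym2 (f p) 0 (f q) := by
  rw [cfc_realSym2 rfl (by ring), mul_zero, sub_self, mul_zero, add_zero, add_slope_mul_sub]

theorem cfc_realSym2_eigenpair (f : ℝ → ℝ) (x y : ℝ) :
    cfc f (realSym2 ((x + y) / 2) ((x - y) / 2) ((x + y) / 2)) =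
      realSym2 ((f x + f y) / 2) ((f x - f y) / 2) ((f x + f y) / 2) := by
  rw [cfc_realSym2 (p := x) (q := y) (by ring) (by ring)]
  have := add_slope_mul_sub f x y
  congr 1 <;> linear_combination this / 2

namespace Matrix.PosDef
open scoped MatrixOrder
variable {n : Type*} [Fintype n] [DecidableEq n] {A B : Matrix n n ℂ}

theorem pos_of_mem_spectrum (hA : A.PosDef) {t : ℝ} (ht : t ∈ spectrum ℝ A) : 0 < t :=
  hA.isStrictlyPositive.spectrum_pos ht

theorem cfc_posDef (hA : A.PosDef) {f : ℝ → ℝ} (hf : ∀ t > 0, 0 < f t) : (cfc f A).PosDef := by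
  rw [← isStrictlyPositive_iff_posDef,
    cfc_isStrictlyPositive_iff f A ((Set.toFinite _).continuousOn f) hA.isHermitian.isSelfAdjoint]
  exact fun t ht => hf t (hA.pos_of_mem_spectrum ht)

theorem inv_sub_inv_posSemidef (hA : A.PosDef) (hB : B.PosDef) (hAB : (B - A).PosSemidef) :
    (A⁻¹ - B⁻¹).PosSemidef := by
  open scoped Matrix.Norms.L2Operator in
  obtain ⟨a, rfl⟩ := hA.isUnit
  obtain ⟨b, rfl⟩ := hB.isUnit
  simpa [le_iff, coe_units_inv] using
    CStarAlgebra.inv_le_inv (a := a) (b := b) (nonneg_iff_posSemidef.mpr hA.posSemidef) hAB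

theorem cfc_inv_comp_inv (hA : A.PosDef) {f : ℝ → ℝ} (hf : ∀ t > 0, 0 < f t) :
    cfc (fun t => (f t⁻¹)⁻¹) A = (cfc f A⁻¹)⁻¹ := by
  have hsa := hA.isHermitian.isSelfAdjoint
  obtain ⟨a, rfl⟩ := hA.isUnit
  rw [cfc_inv (fun t => f t⁻¹) _ ?_ ((Set.toFinite _).continuousOn _) hsa,
    cfc_comp_inv f a ((Set.toFinite _).continuousOn _) hsa, coe_units_inv,
    ← nonsing_inv_eq_ringInverse]
  exact fun t ht => (hf _ (inv_pos.mpr (hA.pos_of_mem_spectrum ht))).ne'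

end Matrix.PosDef

def RightMidpointConcave (f : ℝ → ℝ) : Prop :=
  ∀ ⦃a b δ : ℝ⦄, 0 < a → 0 < b → 0 < δ → (f a + f b) / 2 ≤ f ((a + b) / 2 + δ)

theorem OperatorMonotoneOn'.rightMidpointConcave {f : ℝ → ℝ} (hf : OperatorMonotoneOn' f) :
    RightMidpointConcave f := by
  intro a b δ ha hb hδ
  set m := (a + b) / 2
  set r := (a - b) / 2
  have hmr : m * m - r ^ 2 = a * b := by simp only [m, r]; ring
  have hA : (realSym2 m r m).PosDef :=
    posDef_realSym2 (by positivity) (by nlinarith [mul_pos ha hb])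
  -- The shift `δ` is forced: a positive semidefinite `B - A` with a zero corner would need `r = 0`.
  have hB : (realSym2 (m + δ) 0 (m + r ^ 2 / δ)).PosDef :=
    posDef_realSym2 (by positivity) (by rw [zero_pow two_ne_zero]; positivity)
  have hBA : (realSym2 (m + δ) 0 (m + r ^ 2 / δ) - realSym2 m r m).PosSemidef := by
    rw [realSym2_sub]
    refine posSemidef_realSym2 (by linarith) (by rw [add_sub_cancel_left]; positivity) (le_of_eq ?_)
    field_simp
    ring
  have key := (hf 2 _ _ hA hB hBA).diag_nonneg (i := 0)
  rw [cfc_realSym2_diag, cfc_realSym2_eigenpair, realSym2_sub] at key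
  simp only [realSym2, of_apply, cons_val', cons_val_zero] at key
  rw [Complex.zero_le_real] at key
  linarith

theorem OperatorMonotoneOn'.inv_comp_inv {f : ℝ → ℝ} (hf : OperatorMonotoneOn' f)
    (hpos : ∀ t > 0, 0 < f t) : OperatorMonotoneOn' fun t => (f t⁻¹)⁻¹ := by
  intro n A B hA hB hAB
  rw [hA.cfc_inv_comp_inv hpos, hB.cfc_inv_comp_inv hpos]
  exact (hB.inv.cfc_posDef hpos).inv_sub_inv_posSemidef (hA.inv.cfc_posDef hpos)
    (hf n _ _ hB.inv hA.inv (hA.inv_sub_inv_posSemidef hB hAB))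

open Filter Topology Asymptotics

theorem HasDerivAt.tendsto_mul_sub_of_tendsto {f : ℝ → ℝ} {w x L : ℝ} (hd : HasDerivAt f w x)
    {ι : Type*} {l : Filter ι} {c s : ι → ℝ} (hs : Tendsto s l (𝓝 x))
    (hcs : Tendsto (fun i => c i * (s i - x)) l (𝓝 L)) :
    Tendsto (fun i => c i * (f (s i) - f x)) l (𝓝 (w * L)) := by
  have hlo := (hd.isLittleO.comp_tendsto hs).mul_isBigO (isBigO_refl c l)
  have h0 : Tendsto (fun i => (f (s i) - f x - (s i - x) • w) * c i) l (𝓝 0) :=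
    (isLittleO_one_iff ℝ).mp (hlo.trans_isBigO (by simpa [mul_comm] using hcs.isBigO_one ℝ))
  convert h0.add (hcs.const_mul w) using 1
  · ext i; simp only [smul_eq_mul]; ring
  · simp

theorem RightMidpointConcave.le_tangent {f : ℝ → ℝ} (hf : RightMidpointConcave f) {w x t : ℝ}
    (hx : 0 < x) (hd : HasDerivAt f w x) (ht : 0 < t) : f t ≤ f x + w * (t - x) := by
  suffices h : ∀ η > 0, f t - f x ≤ w * (t - x + η) by
    have hlim : Tendsto (fun η => w * (t - x + η)) (𝓝[>] 0) (𝓝 (w * (t - x))) := by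
      simpa using ((continuous_const.add continuous_id).const_mul w).tendsto' 0 _ rfl
        |>.mono_left nhdsWithin_le_nhds
    linarith [ge_of_tendsto hlim (eventually_nhdsWithin_of_forall h)]
  intro η hη
  -- `s k = (1 - u) x + u t + η u (1 - u)` with `u = 2⁻ᵏ`: the midpoint of `x` and `s k`,
  -- pushed right by `η u²/4`, is `s (k + 1)`.
  set u : ℕ → ℝ := fun k => (2 ^ k)⁻¹
  set s : ℕ → ℝ := fun k => x + u k * (t - x) + η * u k * (1 - u k)
  have hu0 : ∀ k, 0 < u k := fun k => by positivity
  have hu1 : ∀ k, u k ≤ 1 := fun k => inv_le_one_of_one_le₀ (one_le_pow₀ one_le_two)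
  have hs_pos : ∀ k, 0 < s k := fun k => by
    nlinarith [mul_nonneg (sub_nonneg.mpr (hu1 k)) hx.le, mul_pos (hu0 k) ht,
      mul_nonneg (mul_nonneg hη.le (hu0 k).le) (sub_nonneg.mpr (hu1 k))]
  have hs_succ : ∀ k, s (k + 1) = (x + s k) / 2 + η * u (k + 1) ^ 2 := fun k => by
    simp only [s, u, pow_succ]; field_simp; ring
  have hdouble : ∀ k, f t - f x ≤ 2 ^ k * (f (s k) - f x) := by
    intro k
    induction k with
    | zero => simp [s, u]
    | succ k ih =>
      have := hf hx (hs_pos k) (mul_pos hη (pow_pos (hu0 (k + 1)) 2))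
      rw [← hs_succ] at this
      rw [pow_succ]
      nlinarith [pow_pos (two_pos (α := ℝ)) k]
  have hscaled : ∀ k, 2 ^ k * (s k - x) = t - x + η * (1 - u k) := fun k => by
    simp only [s, u]; field_simp; ring
  have hu_lim : Tendsto u atTop (𝓝 0) :=
    tendsto_inv_atTop_zero.comp (tendsto_pow_atTop_atTop_of_one_lt one_lt_two)
  have hs_lim : Tendsto s atTop (𝓝 x) := by
    have := (hu_lim.mul_const (t - x)).add
      ((hu_lim.const_mul η).mul ((tendsto_const_nhds (x := (1 : ℝ))).sub hu_lim))
    simpa [s, add_assoc, mul_assoc] using this.const_add x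
  have hL : Tendsto (fun k => 2 ^ k * (s k - x)) atTop (𝓝 (t - x + η)) := by
    simp only [hscaled]
    simpa using ((tendsto_const_nhds (x := (1 : ℝ))).sub hu_lim).const_mul η |>.const_add (t - x)
  exact ge_of_tendsto' (hd.tendsto_mul_sub_of_tendsto hs_lim hL) hdouble

theorem HasDerivAt.inv_comp_inv {f : ℝ → ℝ} {w : ℝ} (hf : HasDerivAt f w 1) (hf1 : f 1 ≠ 0) :
    HasDerivAt (fun s => (f s⁻¹)⁻¹) (w / f 1 ^ 2) 1 := by
  have hinv : HasDerivAt (fun s : ℝ => s⁻¹) (-1) 1 := by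
    simpa using hasDerivAt_inv (x := (1 : ℝ)) one_ne_zero
  have hf' : HasDerivAt f w (1 : ℝ)⁻¹ := by rwa [inv_one]
  have := (hf'.comp 1 hinv).fun_inv (by simpa using hf1)
  simpa [neg_div] using this

theorem stmt0_general (Φ : ℝ → ℝ) (hmono : OperatorMonotoneOn' Φ) (hpos : ∀ t > (0:ℝ), 0 < Φ t)
    (hΦ1 : Φ 1 = 1) (w : ℝ) (hderiv : HasDerivAt Φ w 1) :
    ∀ t > (0:ℝ), ((1 - w) + w * t⁻¹)⁻¹ ≤ Φ t ∧ Φ t ≤ (1 - w) + w * t := by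
  intro t ht
  have hupper := hmono.rightMidpointConcave.le_tangent one_pos hderiv ht
  have hlower := (hmono.inv_comp_inv hpos).rightMidpointConcave.le_tangent one_pos
    (hderiv.inv_comp_inv (by simp [hΦ1])) (inv_pos.mpr ht)
  simp only [inv_inv, hΦ1, inv_one, one_pow, div_one] at hupper hlower
  exact ⟨inv_le_of_inv_le₀ (hpos t ht) (by linarith), by linarith⟩

theorem stmt0 (Φ : ℝ → ℝ) (hmono : OperatorMonotoneOn' Φ) (hpos : ∀ t > (0:ℝ), 0 < Φ t)
    (hΦ1 : Φ 1 = 1) (w : ℝ) (hw : w ∈ Set.Ioo (0:ℝ) 1) (hderiv : HasDerivAt Φ w 1) :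
    ∀ t > (0:ℝ), ((1 - w) + w * t⁻¹)⁻¹ ≤ Φ t ∧ Φ t ≤ (1 - w) + w * t :=
  stmt0_general Φ hmono hpos hΦ1 w hderiv
end

section
/- Let A and B be Hermitian matrices (of the same size), and let w ∈ (0,1). Then the limit as p → 0⁺ of ((1-w)·exp(pA) + w·exp(pB))^(1/p) equals exp((1-w)A + wB), in the matrix norm topology. -/
/-!
Put `N p = (1 - w) • exp (p • a) + w • exp (p • b)`, so that `N 0 = 1` and `N' 0 = (1 - w) • a + w • b`.
For small `p` the spectrum of `N p` lies near `1`, hence `N p ^ (1 / p) = exp (p⁻¹ • log (N p))`.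
The scalar bound `|log t - (t - 1)| ≤ 2 (t - 1)²`, transported by the functional calculus, gives
`p⁻¹ • log (N p) = p⁻¹ • (N p - 1) + O(p)`, which tends to `N' 0`; continuity of `exp` concludes.
-/

open NormedSpace Filter Topology

lemma Real.abs_log_sub_sub_one_le {t : ℝ} (ht : |t - 1| ≤ 1 / 2) :
    |Real.log t - (t - 1)| ≤ 2 * (t - 1) ^ 2 := by
  have h1t : |1 - t| < 1 := by rw [abs_sub_comm]; linarith
  have h : |1 - t + Real.log t| ≤ (1 - t) ^ 2 / (1 - |1 - t|) := by
    simpa using Real.abs_log_sub_add_sum_range_le h1t 1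
  rw [abs_sub_comm] at ht
  calc |Real.log t - (t - 1)| = |1 - t + Real.log t| := by ring_nf
    _ ≤ (1 - t) ^ 2 / (1 - |1 - t|) := h
    _ ≤ 2 * (t - 1) ^ 2 := by
      rw [div_le_iff₀ (by linarith)]
      nlinarith [sq_nonneg (t - 1)]

namespace CFC

variable {A : Type*} [CStarAlgebra A]

lemma abs_sub_one_le_norm_sub_one {a : A} {x : ℝ} (hx : x ∈ spectrum ℝ a) :
    |x - 1| ≤ ‖a - 1‖ := by
  obtain _ | _ := subsingleton_or_nontrivial A
  · simp [spectrum.of_subsingleton] at hx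
  have hx' : x - 1 ∈ spectrum ℝ (a - 1) := by
    rw [← map_one (algebraMap ℝ A), ← spectrum.sub_singleton_eq]
    exact Set.sub_mem_sub hx rfl
  simpa using spectrum.norm_le_norm_of_mem hx'

lemma norm_log_sub_sub_one_le {a : A} (ha : IsSelfAdjoint a) (h : ‖a - 1‖ ≤ 1 / 2) :
    ‖log a - (a - 1)‖ ≤ 2 * ‖a - 1‖ ^ 2 := by
  have hspec : ∀ x ∈ spectrum ℝ a, |x - 1| ≤ ‖a - 1‖ := fun _ => abs_sub_one_le_norm_sub_one
  have hlog : ContinuousOn Real.log (spectrum ℝ a) := by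
    refine Real.continuousOn_log.mono fun x hx => ?_
    have := abs_le.mp ((hspec x hx).trans h)
    simp only [Set.mem_compl_iff, Set.mem_singleton_iff]
    linarith
  have heq : cfc (fun x => Real.log x - (x - 1)) a = log a - (a - 1) := by
    rw [cfc_sub _ _ a, cfc_sub _ _ a, cfc_id' ℝ a, cfc_const_one ℝ a, log]
  rw [← heq]
  refine norm_cfc_le (by positivity) fun x hx => ?_
  calc ‖Real.log x - (x - 1)‖ ≤ 2 * (x - 1) ^ 2 :=
        Real.abs_log_sub_sub_one_le ((hspec x hx).trans h)
    _ ≤ 2 * ‖a - 1‖ ^ 2 := by rw [← sq_abs]; gcongr; exact hspec x hx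

lemma cfc_rpow_one_div_eq_exp {a : A} (hpos : ∀ x ∈ spectrum ℝ a, 0 < x) (p : ℝ)
    (ha : IsSelfAdjoint a := by cfc_tac) :
    cfc (fun x : ℝ => x ^ (1 / p)) a = exp (p⁻¹ • log a) := by
  have hlog : ContinuousOn Real.log (spectrum ℝ a) :=
    Real.continuousOn_log.mono fun x hx => (hpos x hx).ne'
  rw [← real_exp_eq_normedSpace_exp, log, ← cfc_const_mul _ _ a, ← cfc_comp' Real.exp _ a]
  refine cfc_congr fun x hx => ?_
  rw [Real.rpow_def_of_pos (hpos x hx), one_div, mul_comm]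

lemma pos_of_mem_spectrum_of_norm_sub_one_lt {a : A} (h : ‖a - 1‖ < 1) {x : ℝ}
    (hx : x ∈ spectrum ℝ a) : 0 < x := by
  have := abs_lt.mp ((abs_sub_one_le_norm_sub_one hx).trans_lt h)
  linarith

variable {N : ℝ → A} {C : A}

lemma tendsto_inv_smul_log_of_hasDerivAt (hN : ∀ p, IsSelfAdjoint (N p)) (h0 : N 0 = 1)
    (hd : HasDerivAt N C 0) : Tendsto (fun p => p⁻¹ • log (N p)) (𝓝[≠] 0) (𝓝 C) := by
  have hslope : Tendsto (fun p => p⁻¹ • (N p - 1)) (𝓝[≠] 0) (𝓝 C) := by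
    refine (hasDerivAt_iff_tendsto_slope.mp hd).congr fun p => ?_
    rw [slope_def_module, h0, sub_zero]
  have hsmall : ∀ᶠ p in 𝓝[≠] 0, ‖N p - 1‖ ≤ 1 / 2 := by
    have h := tendsto_iff_norm_sub_tendsto_zero.mp (h0 ▸ hd.continuousAt.tendsto)
    exact nhdsWithin_le_nhds (h.eventually (ge_mem_nhds (by norm_num)))
  have hbound : ∀ᶠ p in 𝓝[≠] 0, ‖p⁻¹ • (log (N p) - (N p - 1))‖ ≤
      2 * |p| * ‖p⁻¹ • (N p - 1)‖ ^ 2 := by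
    filter_upwards [hsmall, self_mem_nhdsWithin] with p hp hp0
    have hp0 : |p| ≠ 0 := abs_ne_zero.mpr hp0
    rw [norm_smul, norm_smul, norm_inv, Real.norm_eq_abs]
    calc |p|⁻¹ * ‖log (N p) - (N p - 1)‖ ≤ |p|⁻¹ * (2 * ‖N p - 1‖ ^ 2) := by
          gcongr; exact norm_log_sub_sub_one_le (hN p) hp
      _ = 2 * |p| * (|p|⁻¹ * ‖N p - 1‖) ^ 2 := by field_simp
  have hlim : Tendsto (fun p => 2 * |p| * ‖p⁻¹ • (N p - 1)‖ ^ 2) (𝓝[≠] 0) (𝓝 0) := by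
    have habs : Tendsto (fun p : ℝ => 2 * |p|) (𝓝[≠] 0) (𝓝 0) := by
      simpa using ((continuous_abs.tendsto (0 : ℝ)).const_mul 2).mono_left nhdsWithin_le_nhds
    simpa using habs.mul (hslope.norm.pow 2)
  have herr := squeeze_zero_norm' hbound hlim
  simpa [← smul_add] using herr.add hslope

theorem tendsto_cfc_rpow_one_div_of_hasDerivAt (hN : ∀ p, IsSelfAdjoint (N p)) (h0 : N 0 = 1)
    (hd : HasDerivAt N C 0) :
    Tendsto (fun p => cfc (fun x : ℝ => x ^ (1 / p)) (N p)) (𝓝[≠] 0) (𝓝 (exp C)) := by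
  have hpos : ∀ᶠ p in 𝓝[≠] 0, ∀ x ∈ spectrum ℝ (N p), 0 < x := by
    have h := tendsto_iff_norm_sub_tendsto_zero.mp (h0 ▸ hd.continuousAt.tendsto)
    exact nhdsWithin_le_nhds ((h.eventually (gt_mem_nhds one_pos)).mono
      fun p hp _ => pos_of_mem_spectrum_of_norm_sub_one_lt hp)
  refine ((exp_analytic (𝕂 := ℝ) C).continuousAt.tendsto.comp
    (tendsto_inv_smul_log_of_hasDerivAt hN h0 hd)).congr' ?_
  filter_upwards [hpos] with p hp
  exact (cfc_rpow_one_div_eq_exp hp p (hN p)).symm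

theorem tendsto_cfc_rpow_one_div_convexComb_exp {a b : A} (ha : IsSelfAdjoint a)
    (hb : IsSelfAdjoint b) (w : ℝ) :
    Tendsto (fun p : ℝ => cfc (fun x : ℝ => x ^ (1 / p))
        ((1 - w) • cfc Real.exp (p • a) + w • cfc Real.exp (p • b)))
      (𝓝[≠] 0) (𝓝 (cfc Real.exp ((1 - w) • a + w • b))) := by
  have hexp {x : A} (hx : IsSelfAdjoint x) (p : ℝ) : cfc Real.exp (p • x) = exp (p • x) :=
    real_exp_eq_normedSpace_exp (.smul (.all p) hx)
  have hd : HasDerivAt (fun p : ℝ => (1 - w) • exp (p • a) + w • exp (p • b))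
      ((1 - w) • a + w • b) 0 := by
    have ha' := hasDerivAt_exp_smul_const (𝕂 := ℝ) a 0
    have hb' := hasDerivAt_exp_smul_const (𝕂 := ℝ) b 0
    simp only [zero_smul, exp_zero, one_mul] at ha' hb'
    exact (ha'.const_smul (1 - w)).add (hb'.const_smul w)
  have hN (p : ℝ) : IsSelfAdjoint ((1 - w) • exp (p • a) + w • exp (p • b)) :=
    .add (.smul (.all _) (.exp (.smul (.all p) ha))) (.smul (.all _) (.exp (.smul (.all p) hb)))
  have h0 : (1 - w) • exp ((0 : ℝ) • a) + w • exp ((0 : ℝ) • b) = (1 : A) := by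
    simp [← add_smul]
  simp_rw [hexp ha, hexp hb,
    real_exp_eq_normedSpace_exp (.add (.smul (.all _) ha) (.smul (.all _) hb))]
  exact tendsto_cfc_rpow_one_div_of_hasDerivAt hN h0 hd

end CFC

theorem stmt3_general {m : ℕ} (A B : Matrix (Fin m) (Fin m) ℂ)
    (hA : A.IsHermitian) (hB : B.IsHermitian) (w : ℝ) :
    Filter.Tendsto
      (fun p : ℝ =>
        cfc (fun x : ℝ => x ^ (1 / p))
          ((1 - w) • cfc Real.exp (p • A) + w • cfc Real.exp (p • B)))
      (nhdsWithin 0 (Set.Ioi 0))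
      (nhds (cfc Real.exp ((1 - w) • A + w • B))) := by
  open scoped Matrix.Norms.L2Operator in
  exact (CFC.tendsto_cfc_rpow_one_div_convexComb_exp hA.isSelfAdjoint hB.isSelfAdjoint w).mono_left
    (nhdsWithin_mono _ fun p hp => ne_of_gt hp)

theorem stmt3 {m : ℕ} (A B : Matrix (Fin m) (Fin m) ℂ)
    (hA : A.IsHermitian) (hB : B.IsHermitian) (w : ℝ) (hw : w ∈ Set.Ioo (0:ℝ) 1) :
    Filter.Tendsto
      (fun p : ℝ =>
        cfc (fun x : ℝ => x ^ (1 / p))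
          ((1 - w) • cfc Real.exp (p • A) + w • cfc Real.exp (p • B)))
      (nhdsWithin 0 (Set.Ioi 0))
      (nhds (cfc Real.exp ((1 - w) • A + w • B))) :=
  stmt3_general A B hA hB w
end

section
/- For positive definite matrices A₁,...,Aₙ and a probability vector ω with positive entries, log (Σᵢ wᵢ Aᵢ⁻¹)⁻¹ ≤ log 𝔊_E(ω;𝔸), where 𝔊_E(ω;𝔸) = exp(Σᵢ wᵢ log Aᵢ) is the log-Euclidean mean. -/
/-!
Since `log a⁻¹ = -log a`, the claim `log (∑ wᵢ • aᵢ⁻¹)⁻¹ ≤ ∑ wᵢ • log aᵢ` is Jensen's inequality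
for the operator concave function `log`, applied to the `aᵢ⁻¹` and negated; on the left-hand side
of the theorem, `log (exp X) = X`.
-/

open Matrix
open scoped ComplexOrder Ring

namespace CFC

lemma log_ringInverse {A : Type*} [NormedRing A] [StarRing A] [NormedAlgebra ℝ A]
    [ContinuousFunctionalCalculus ℝ A IsSelfAdjoint] [ContinuousMap.UniqueHom ℝ A] {a : A}
    (ha : IsUnit a) (ha' : IsSelfAdjoint a := by cfc_tac) : log a⁻¹ʳ = -log a := by
  obtain ⟨u, rfl⟩ := ha
  rw [Ring.inverse_unit, log, log, ← cfc_comp_inv Real.log u]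
  simp only [Real.log_inv]
  exact cfc_neg ..

variable {A : Type*} [CStarAlgebra A] [PartialOrder A] [StarOrderedRing A]

theorem log_ringInverse_sum_smul_ringInverse_le {ι : Type*} (s : Finset ι) (w : ι → ℝ)
    (a : ι → A) (hw : ∀ i ∈ s, 0 ≤ w i) (hw1 : ∑ i ∈ s, w i = 1)
    (ha : ∀ i ∈ s, IsStrictlyPositive (a i)) :
    log (∑ i ∈ s, w i • (a i)⁻¹ʳ)⁻¹ʳ ≤ ∑ i ∈ s, w i • log (a i) := by
  have hinv : ∀ i ∈ s, IsStrictlyPositive (a i)⁻¹ʳ := fun i hi => (ha i hi).ringInverse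
  have hmean : IsStrictlyPositive (∑ i ∈ s, w i • (a i)⁻¹ʳ) :=
    (concaveOn_log (A := A)).1.sum_mem hw hw1 hinv
  calc log (∑ i ∈ s, w i • (a i)⁻¹ʳ)⁻¹ʳ = -log (∑ i ∈ s, w i • (a i)⁻¹ʳ) :=
        log_ringInverse hmean.isUnit
    _ ≤ -∑ i ∈ s, w i • log (a i)⁻¹ʳ := neg_le_neg (concaveOn_log.le_map_sum hw hw1 hinv)
    _ = ∑ i ∈ s, w i • log (a i) := by
      rw [← Finset.sum_neg_distrib]
      refine Finset.sum_congr rfl fun i hi => ?_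
      rw [log_ringInverse (ha i hi).isUnit, smul_neg, neg_neg]

end CFC

theorem stmt13 {n m : ℕ} (A : Fin n → Matrix (Fin m) (Fin m) ℂ)
    (hA : ∀ i, (A i).PosDef) (w : Fin n → ℝ) (hw : ∀ i, 0 < w i) (hw1 : ∑ i, w i = 1) :
    (cfc Real.log (cfc Real.exp (∑ i, w i • cfc Real.log (A i))) -
      cfc Real.log ((∑ i, w i • (A i)⁻¹)⁻¹)).PosSemidef := by
  open scoped Matrix.Norms.L2Operator MatrixOrder in
  · have hX : IsSelfAdjoint (∑ i, w i • cfc Real.log (A i)) :=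
      isSelfAdjoint_sum _ fun i _ => .smul (star_trivial _) (cfc_predicate _ _)
    rw [CFC.real_exp_eq_normedSpace_exp hX, ← CFC.log, CFC.log_exp _ hX]
    simp only [nonsing_inv_eq_ringInverse]
    exact CFC.log_ringInverse_sum_smul_ringInverse_le _ w A (fun i _ => (hw i).le) hw1
      fun i _ => (hA i).isStrictlyPositive
end

section
/- If A, B are positive definite matrices with log A ≤ log B, then ‖A‖ ≤ ‖B‖ (operator norm). Consequently, the log-Euclidean mean satisfies ‖(Σᵢ wᵢAᵢ⁻¹)⁻¹‖ ≤ ‖exp(Σᵢ wᵢ log Aᵢ)‖ ≤ ‖Σᵢ wᵢAᵢ‖ for positive definite A₁,...,Aₙ and any probability vector ω with positive entries. -/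
/-!
For a Hermitian `A` and a unit vector `x`, the quadratic form `⟪f(A) x, x⟫` is the average of
`f` over the eigenvalues of `A`, weighted by the squared coordinates of `x` in an eigenbasis,
so Jensen's inequality gives `exp ⟪A x, x⟫ ≤ ⟪exp(A) x, x⟫`. The norm of `f(A)` is the largest
`|f(λ)|`, and each `f(λ)` is a quadratic form at an eigenvector `x`. For `‖A‖ ≤ ‖B‖` this gives
`λ = exp ⟪log A x, x⟫ ≤ exp ⟪log B x, x⟫ ≤ ⟪B x, x⟫ ≤ ‖B‖`. For the means, a second Jensen step
over the weights gives `exp ⟪(∑ wᵢ log Aᵢ) x, x⟫ ≤ ⟪(∑ wᵢ Aᵢ) x, x⟫`, and the harmonic bound is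
the same inequality for the `Aᵢ⁻¹`.
-/

open Matrix ContinuousLinearMap
open scoped ComplexOrder

lemma ContinuousLinearMap.reApplyInnerSelf_le_norm {𝕜 E : Type*} [RCLike 𝕜]
    [NormedAddCommGroup E] [InnerProductSpace 𝕜 E] (T : E →L[𝕜] E) {x : E} (hx : ‖x‖ = 1) :
    T.reApplyInnerSelf x ≤ ‖T‖ :=
  calc T.reApplyInnerSelf x ≤ ‖T x‖ * ‖x‖ := re_inner_le_norm _ _
    _ ≤ ‖T‖ * ‖x‖ * ‖x‖ := by gcongr; exact T.le_opNorm x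
    _ = ‖T‖ := by rw [hx, mul_one, mul_one]

namespace Matrix

variable {𝕜 n : Type*} [RCLike 𝕜] [Fintype n] [DecidableEq n] {A B : Matrix n n 𝕜}

lemma reApplyInnerSelf_toEuclideanCLM_sum_smul {ι : Type*} (s : Finset ι) (w : ι → ℝ)
    (M : ι → Matrix n n 𝕜) (x : EuclideanSpace 𝕜 n) :
    (toEuclideanCLM (𝕜 := 𝕜) (∑ i ∈ s, w i • M i)).reApplyInnerSelf x =
      ∑ i ∈ s, w i * (toEuclideanCLM (𝕜 := 𝕜) (M i)).reApplyInnerSelf x := by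
  simp only [reApplyInnerSelf_apply, RCLike.real_smul_eq_coe_smul (K := 𝕜), map_sum, map_smul,
    _root_.sum_apply, _root_.smul_apply, sum_inner, inner_smul_left, RCLike.conj_ofReal, map_sum,
    RCLike.re_ofReal_mul]

lemma reApplyInnerSelf_toEuclideanCLM_neg (M : Matrix n n 𝕜) (x : EuclideanSpace 𝕜 n) :
    (toEuclideanCLM (𝕜 := 𝕜) (-M)).reApplyInnerSelf x =
      -(toEuclideanCLM (𝕜 := 𝕜) M).reApplyInnerSelf x := by
  simp only [reApplyInnerSelf_apply, map_neg, _root_.neg_apply, inner_neg_left]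

lemma PosSemidef.reApplyInnerSelf_toEuclideanCLM_le (h : (B - A).PosSemidef)
    (x : EuclideanSpace 𝕜 n) :
    (toEuclideanCLM (𝕜 := 𝕜) A).reApplyInnerSelf x ≤
      (toEuclideanCLM (𝕜 := 𝕜) B).reApplyInnerSelf x := by
  have := (isPositive_toEuclideanLin_iff.mpr h).2 x
  rw [map_sub, LinearMap.sub_apply, inner_sub_left, map_sub, sub_nonneg] at this
  exact this

namespace IsHermitian

variable (hA : A.IsHermitian)
include hA

lemma toEuclideanCLM_cfc_eigenvectorBasis (f : ℝ → ℝ) (j : n) :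
    toEuclideanCLM (𝕜 := 𝕜) (cfc f A) (hA.eigenvectorBasis j) =
      f (hA.eigenvalues j) • hA.eigenvectorBasis j := by
  ext1
  rw [ofLp_toEuclideanCLM, hA.cfc_eq, IsHermitian.cfc, Unitary.conjStarAlgAut_apply,
    ← mulVec_mulVec, ← mulVec_mulVec, star_eigenvectorUnitary_mulVec, diagonal_mulVec_single,
    ← smul_eq_mul, Pi.single_smul', mulVec_smul, eigenvectorUnitary_mulVec]
  simp only [Function.comp_apply, WithLp.ofLp_smul, RCLike.real_smul_eq_coe_smul (K := 𝕜)]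

lemma reApplyInnerSelf_toEuclideanCLM_cfc_eigenvectorBasis (f : ℝ → ℝ) (j : n) :
    (toEuclideanCLM (𝕜 := 𝕜) (cfc f A)).reApplyInnerSelf (hA.eigenvectorBasis j) =
      f (hA.eigenvalues j) := by
  rw [reApplyInnerSelf_apply, hA.toEuclideanCLM_cfc_eigenvectorBasis,
    RCLike.real_smul_eq_coe_smul (K := 𝕜), inner_smul_left, RCLike.conj_ofReal,
    inner_self_eq_norm_sq_to_K, hA.eigenvectorBasis.norm_eq_one]
  simp

lemma reApplyInnerSelf_toEuclideanCLM_eigenvectorBasis (j : n) :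
    (toEuclideanCLM (𝕜 := 𝕜) A).reApplyInnerSelf (hA.eigenvectorBasis j) = hA.eigenvalues j := by
  simpa only [cfc_id ℝ A hA.isSelfAdjoint, id] using
    hA.reApplyInnerSelf_toEuclideanCLM_cfc_eigenvectorBasis id j

lemma reApplyInnerSelf_toEuclideanCLM_cfc (f : ℝ → ℝ) (x : EuclideanSpace 𝕜 n) :
    (toEuclideanCLM (𝕜 := 𝕜) (cfc f A)).reApplyInnerSelf x =
      ∑ j, ‖inner 𝕜 (hA.eigenvectorBasis j) x‖ ^ 2 * f (hA.eigenvalues j) := by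
  have hx : toEuclideanCLM (𝕜 := 𝕜) (cfc f A) x =
      ∑ j, (inner 𝕜 (hA.eigenvectorBasis j) x * f (hA.eigenvalues j)) • hA.eigenvectorBasis j := by
    conv_lhs => rw [← hA.eigenvectorBasis.sum_repr x]
    simp only [map_sum, map_smul, hA.toEuclideanCLM_cfc_eigenvectorBasis, smul_smul,
      RCLike.real_smul_eq_coe_smul (K := 𝕜), hA.eigenvectorBasis.repr_apply_apply]
  have : inner 𝕜 (toEuclideanCLM (𝕜 := 𝕜) (cfc f A) x) x =
      ((∑ j, ‖inner 𝕜 (hA.eigenvectorBasis j) x‖ ^ 2 * f (hA.eigenvalues j) : ℝ) : 𝕜) := by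
    simp only [hx, sum_inner, inner_smul_left]
    push_cast
    refine Finset.sum_congr rfl fun j _ => ?_
    rw [map_mul, RCLike.conj_ofReal, mul_right_comm, RCLike.conj_mul]
  rw [reApplyInnerSelf_apply, this, RCLike.ofReal_re]

lemma _root_.ConvexOn.map_reApplyInnerSelf_toEuclideanCLM_le {s : Set ℝ} {φ : ℝ → ℝ}
    (hφ : ConvexOn ℝ s φ) (hs : ∀ i, hA.eigenvalues i ∈ s) {x : EuclideanSpace 𝕜 n}
    (hx : ‖x‖ = 1) :
    φ ((toEuclideanCLM (𝕜 := 𝕜) A).reApplyInnerSelf x) ≤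
      (toEuclideanCLM (𝕜 := 𝕜) (cfc φ A)).reApplyInnerSelf x := by
  conv_lhs => rw [← cfc_id ℝ A hA.isSelfAdjoint]
  rw [hA.reApplyInnerSelf_toEuclideanCLM_cfc, hA.reApplyInnerSelf_toEuclideanCLM_cfc]
  have hw : ∑ j, ‖inner 𝕜 (hA.eigenvectorBasis j) x‖ ^ 2 = 1 := by
    rw [hA.eigenvectorBasis.sum_sq_norm_inner_right, hx, one_pow]
  simpa only [smul_eq_mul, id] using
    hφ.map_sum_le (fun j _ => sq_nonneg _) hw fun j _ => hs j

lemma exp_reApplyInnerSelf_toEuclideanCLM_le {x : EuclideanSpace 𝕜 n} (hx : ‖x‖ = 1) :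
    Real.exp ((toEuclideanCLM (𝕜 := 𝕜) A).reApplyInnerSelf x) ≤
      (toEuclideanCLM (𝕜 := 𝕜) (cfc Real.exp A)).reApplyInnerSelf x :=
  convexOn_exp.map_reApplyInnerSelf_toEuclideanCLM_le hA (fun _ => Set.mem_univ _) hx

lemma norm_toEuclideanCLM_cfc_le (f : ℝ → ℝ) {c : ℝ} (hc : 0 ≤ c)
    (hf : ∀ i, |f (hA.eigenvalues i)| ≤ c) : ‖toEuclideanCLM (𝕜 := 𝕜) (cfc f A)‖ ≤ c := by
  open scoped Matrix.Norms.L2Operator in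
  rw [← cstar_norm_def, hA.cfc_eq, IsHermitian.cfc, Unitary.conjStarAlgAut_apply, mul_assoc,
    CStarRing.norm_mem_unitary_mul _ hA.eigenvectorUnitary.2,
    CStarRing.norm_mul_mem_unitary _ (Unitary.star_mem hA.eigenvectorUnitary.2),
    l2_opNorm_diagonal, pi_norm_le_iff_of_nonneg hc]
  simpa using hf

end IsHermitian

namespace PosDef

variable (hA : A.PosDef)
include hA

lemma spectrum_subset_Ioi : spectrum ℝ A ⊆ Set.Ioi 0 := by
  rw [hA.1.spectrum_real_eq_range_eigenvalues]
  rintro _ ⟨i, rfl⟩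
  exact hA.eigenvalues_pos i

lemma cfc_inv : cfc (·⁻¹ : ℝ → ℝ) A = A⁻¹ := by
  simpa using cfc_inv_id (R := ℝ) hA.isUnit.unit hA.1.isSelfAdjoint

lemma cfc_exp_cfc_log : cfc Real.exp (cfc Real.log A) = A := by
  rw [← cfc_comp Real.exp Real.log A hA.1.isSelfAdjoint (by fun_prop)
    (finite_real_spectrum.continuousOn _)]
  conv_rhs => rw [← cfc_id ℝ A hA.1.isSelfAdjoint]
  exact cfc_congr fun t ht => Real.exp_log (hA.spectrum_subset_Ioi ht)

lemma cfc_log_inv : cfc Real.log A⁻¹ = -cfc Real.log A := by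
  rw [← hA.cfc_inv, ← cfc_comp Real.log _ A hA.1.isSelfAdjoint
    ((finite_real_spectrum.image _).continuousOn _) (finite_real_spectrum.continuousOn _),
    ← cfc_neg]
  exact cfc_congr fun t _ => Real.log_inv t

lemma exp_reApplyInnerSelf_toEuclideanCLM_cfc_log_le {x : EuclideanSpace 𝕜 n} (hx : ‖x‖ = 1) :
    Real.exp ((toEuclideanCLM (𝕜 := 𝕜) (cfc Real.log A)).reApplyInnerSelf x) ≤
      (toEuclideanCLM (𝕜 := 𝕜) A).reApplyInnerSelf x := by
  simpa only [hA.cfc_exp_cfc_log] using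
    (cfc_predicate Real.log A).isHermitian.exp_reApplyInnerSelf_toEuclideanCLM_le hx

end PosDef

lemma isHermitian_sum_smul_cfc {ι : Type*} (s : Finset ι) (w : ι → ℝ) (f : ℝ → ℝ)
    (M : ι → Matrix n n 𝕜) : (∑ i ∈ s, w i • cfc f (M i)).IsHermitian :=
  isSelfAdjoint_sum s fun i _ => (IsSelfAdjoint.all (w i)).smul (cfc_predicate f (M i))

theorem PosDef.norm_toEuclideanCLM_le_of_posSemidef_cfc_log_sub (hA : A.PosDef) (hB : B.PosDef)
    (h : (cfc Real.log B - cfc Real.log A).PosSemidef) :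
    ‖toEuclideanCLM (𝕜 := 𝕜) A‖ ≤ ‖toEuclideanCLM (𝕜 := 𝕜) B‖ := by
  rw [← cfc_id ℝ A hA.1.isSelfAdjoint]
  refine hA.1.norm_toEuclideanCLM_cfc_le _ (norm_nonneg _) fun i => ?_
  have hpos := hA.eigenvalues_pos i
  have hx := hA.1.eigenvectorBasis.norm_eq_one i
  calc |id (hA.1.eigenvalues i)|
      = Real.exp ((toEuclideanCLM (𝕜 := 𝕜) (cfc Real.log A)).reApplyInnerSelf
          (hA.1.eigenvectorBasis i)) := by
        rw [hA.1.reApplyInnerSelf_toEuclideanCLM_cfc_eigenvectorBasis, id, abs_of_pos hpos,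
          Real.exp_log hpos]
    _ ≤ Real.exp ((toEuclideanCLM (𝕜 := 𝕜) (cfc Real.log B)).reApplyInnerSelf
          (hA.1.eigenvectorBasis i)) :=
        Real.exp_le_exp.2 (h.reApplyInnerSelf_toEuclideanCLM_le _)
    _ ≤ (toEuclideanCLM (𝕜 := 𝕜) B).reApplyInnerSelf (hA.1.eigenvectorBasis i) :=
        hB.exp_reApplyInnerSelf_toEuclideanCLM_cfc_log_le hx
    _ ≤ ‖toEuclideanCLM (𝕜 := 𝕜) B‖ := reApplyInnerSelf_le_norm _ hx

section WeightedMeans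

variable {ι : Type*} [Fintype ι] {A : ι → Matrix n n 𝕜} {w : ι → ℝ}

lemma exp_reApplyInnerSelf_toEuclideanCLM_sum_smul_cfc_log_le (hA : ∀ i, (A i).PosDef)
    (hw : ∀ i, 0 ≤ w i) (hsum : ∑ i, w i = 1) {x : EuclideanSpace 𝕜 n} (hx : ‖x‖ = 1) :
    Real.exp ((toEuclideanCLM (𝕜 := 𝕜) (∑ i, w i • cfc Real.log (A i))).reApplyInnerSelf x) ≤
      (toEuclideanCLM (𝕜 := 𝕜) (∑ i, w i • A i)).reApplyInnerSelf x := by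
  set q := fun i => (toEuclideanCLM (𝕜 := 𝕜) (cfc Real.log (A i))).reApplyInnerSelf x
  rw [reApplyInnerSelf_toEuclideanCLM_sum_smul, reApplyInnerSelf_toEuclideanCLM_sum_smul]
  calc Real.exp (∑ i, w i * q i) ≤ ∑ i, w i * Real.exp (q i) := by
        simpa only [smul_eq_mul] using
          convexOn_exp.map_sum_le (fun i _ => hw i) hsum fun i _ => Set.mem_univ (q i)
    _ ≤ ∑ i, w i * (toEuclideanCLM (𝕜 := 𝕜) (A i)).reApplyInnerSelf x := by
        gcongr with i
        · exact hw i
        · exact (hA i).exp_reApplyInnerSelf_toEuclideanCLM_cfc_log_le hx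

theorem norm_toEuclideanCLM_cfc_exp_le_sum_smul (hA : ∀ i, (A i).PosDef) (hw : ∀ i, 0 ≤ w i)
    (hsum : ∑ i, w i = 1) :
    ‖toEuclideanCLM (𝕜 := 𝕜) (cfc Real.exp (∑ i, w i • cfc Real.log (A i)))‖ ≤
      ‖toEuclideanCLM (𝕜 := 𝕜) (∑ i, w i • A i)‖ := by
  have hM := isHermitian_sum_smul_cfc Finset.univ w Real.log A
  refine hM.norm_toEuclideanCLM_cfc_le _ (norm_nonneg _) fun j => ?_
  have hx := hM.eigenvectorBasis.norm_eq_one j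
  rw [abs_of_pos (Real.exp_pos _), ← hM.reApplyInnerSelf_toEuclideanCLM_eigenvectorBasis]
  exact (exp_reApplyInnerSelf_toEuclideanCLM_sum_smul_cfc_log_le hA hw hsum hx).trans
    (reApplyInnerSelf_le_norm _ hx)

theorem norm_toEuclideanCLM_inv_sum_smul_inv_le_cfc_exp (hA : ∀ i, (A i).PosDef)
    (hw : ∀ i, 0 < w i) (hsum : ∑ i, w i = 1) :
    ‖toEuclideanCLM (𝕜 := 𝕜) (∑ i, w i • (A i)⁻¹)⁻¹‖ ≤
      ‖toEuclideanCLM (𝕜 := 𝕜) (cfc Real.exp (∑ i, w i • cfc Real.log (A i)))‖ := by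
  set M := ∑ i, w i • cfc Real.log (A i)
  have hM : M.IsHermitian := isHermitian_sum_smul_cfc Finset.univ w Real.log A
  have hS : (∑ i, w i • (A i)⁻¹).PosDef :=
    posDef_sum (Finset.nonempty_of_sum_ne_zero (by rw [hsum]; exact one_ne_zero))
      fun i _ => (hA i).inv.smul (hw i)
  rw [← hS.cfc_inv]
  refine hS.1.norm_toEuclideanCLM_cfc_le _ (norm_nonneg _) fun j => ?_
  set x := hS.1.eigenvectorBasis j
  have hx : ‖x‖ = 1 := hS.1.eigenvectorBasis.norm_eq_one j
  have hneg : (toEuclideanCLM (𝕜 := 𝕜) (∑ i, w i • cfc Real.log (A i)⁻¹)).reApplyInnerSelf x =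
      -(toEuclideanCLM (𝕜 := 𝕜) M).reApplyInnerSelf x := by
    simp only [M, reApplyInnerSelf_toEuclideanCLM_sum_smul, (hA _).cfc_log_inv,
      reApplyInnerSelf_toEuclideanCLM_neg, mul_neg, Finset.sum_neg_distrib]
  -- the arithmetic-mean bound for the `(A i)⁻¹`, whose logarithms are `-cfc Real.log (A i)`
  have hσ : Real.exp (-(toEuclideanCLM (𝕜 := 𝕜) M).reApplyInnerSelf x) ≤ hS.1.eigenvalues j := by
    rw [← hneg, ← hS.1.reApplyInnerSelf_toEuclideanCLM_eigenvectorBasis]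
    exact exp_reApplyInnerSelf_toEuclideanCLM_sum_smul_cfc_log_le (fun i => (hA i).inv)
      (fun i => (hw i).le) hsum hx
  calc |(hS.1.eigenvalues j)⁻¹| = (hS.1.eigenvalues j)⁻¹ :=
        abs_of_pos (inv_pos.2 (hS.eigenvalues_pos j))
    _ ≤ Real.exp ((toEuclideanCLM (𝕜 := 𝕜) M).reApplyInnerSelf x) := by
        rw [← inv_inv (Real.exp _), ← Real.exp_neg]
        exact inv_anti₀ (Real.exp_pos _) hσ
    _ ≤ ‖toEuclideanCLM (𝕜 := 𝕜) (cfc Real.exp M)‖ :=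
        (hM.exp_reApplyInnerSelf_toEuclideanCLM_le hx).trans (reApplyInnerSelf_le_norm _ hx)

end WeightedMeans

end Matrix

theorem stmt14 :
    (∀ (m : ℕ) (A B : Matrix (Fin m) (Fin m) ℂ), A.PosDef → B.PosDef →
      (cfc Real.log B - cfc Real.log A).PosSemidef →
      ‖Matrix.toEuclideanCLM (𝕜 := ℂ) A‖ ≤ ‖Matrix.toEuclideanCLM (𝕜 := ℂ) B‖) ∧
    (∀ (n m : ℕ) (A : Fin n → Matrix (Fin m) (Fin m) ℂ) (w : Fin n → ℝ),
      (∀ i, (A i).PosDef) → (∀ i, 0 < w i) → ∑ i, w i = 1 →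
      ‖Matrix.toEuclideanCLM (𝕜 := ℂ) (∑ i, w i • (A i)⁻¹)⁻¹‖ ≤
        ‖Matrix.toEuclideanCLM (𝕜 := ℂ) (cfc Real.exp (∑ i, w i • cfc Real.log (A i)))‖ ∧
      ‖Matrix.toEuclideanCLM (𝕜 := ℂ) (cfc Real.exp (∑ i, w i • cfc Real.log (A i)))‖ ≤
        ‖Matrix.toEuclideanCLM (𝕜 := ℂ) (∑ i, w i • A i)‖) :=
  ⟨fun _ _ _ hA hB h => hA.norm_toEuclideanCLM_le_of_posSemidef_cfc_log_sub hB h,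
    fun _ _ _ _ hA hw hsum => ⟨norm_toEuclideanCLM_inv_sum_smul_inv_le_cfc_exp hA hw hsum,
      norm_toEuclideanCLM_cfc_exp_le_sum_smul hA (fun i => (hw i).le) hsum⟩⟩
end

section
/- For a probability measure μ on a set Ω and a μ-integrable family ω ↦ X(ω) of positive definite matrices, the operator Jensen inequality (∫ X(ω)⁻¹ dμ(ω))⁻¹ ≤ ∫ X(ω) dμ(ω) holds. -/
/-!
For positive definite `X`, the block matrix `[[X, 1], [1, X⁻¹]]` is positive semidefinite, its
Schur complement `X - 1 * (X⁻¹)⁻¹ * 1` being zero. Positive semidefiniteness survives entrywise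
integration, and since `μ` is a probability measure the off-diagonal blocks integrate to `1`, so
`[[∫ X, 1], [1, ∫ X⁻¹]]` is positive semidefinite. Its Schur complement `∫ X - (∫ X⁻¹)⁻¹` is
therefore positive semidefinite.
-/

open MeasureTheory
open scoped ComplexOrder

section EntrywiseIntegral

variable {Ω 𝕜 : Type*} [RCLike 𝕜] [MeasurableSpace Ω] {μ : Measure Ω}

theorem MeasureTheory.integral_pos_of_forall_pos [NeZero μ] {f : Ω → 𝕜} (hf : Integrable f μ)
    (h : ∀ ω, 0 < f ω) : 0 < ∫ ω, f ω ∂μ := by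
  have hf_re : ∀ ω, (RCLike.re (f ω) : 𝕜) = f ω := fun ω =>
    RCLike.conj_eq_iff_re.mp (RCLike.conj_eq_iff_im.mpr (RCLike.pos_iff.mp (h ω)).2)
  have hsupport : Function.support (fun ω => RCLike.re (f ω)) = Set.univ :=
    Set.eq_univ_of_forall fun ω => (RCLike.pos_iff.mp (h ω)).1.ne'
  rw [integral_congr_ae (ae_of_all μ fun ω => (hf_re ω).symm), integral_ofReal,
    RCLike.ofReal_pos,
    integral_pos_iff_support_of_nonneg (fun ω => (RCLike.pos_iff.mp (h ω)).1.le) hf.re, hsupport]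
  simp [NeZero.ne μ]

namespace Matrix

variable {l m n p : Type*}

noncomputable def entrywiseIntegral (μ : Measure Ω) (M : Ω → Matrix m n 𝕜) : Matrix m n 𝕜 :=
  of fun i j => ∫ ω, M ω i j ∂μ

theorem entrywiseIntegral_const [IsProbabilityMeasure μ] (A : Matrix m n 𝕜) :
    entrywiseIntegral μ (fun _ => A) = A := by
  ext i j
  simp [entrywiseIntegral]

theorem entrywiseIntegral_fromBlocks (A : Ω → Matrix l n 𝕜) (B : Ω → Matrix l p 𝕜)
    (C : Ω → Matrix m n 𝕜) (D : Ω → Matrix m p 𝕜) :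
    entrywiseIntegral μ (fun ω => fromBlocks (A ω) (B ω) (C ω) (D ω)) =
      fromBlocks (entrywiseIntegral μ A) (entrywiseIntegral μ B)
        (entrywiseIntegral μ C) (entrywiseIntegral μ D) := by
  ext (i | i) (j | j) <;> rfl

theorem integrable_fromBlocks_apply {A : Ω → Matrix l n 𝕜} {B : Ω → Matrix l p 𝕜}
    {C : Ω → Matrix m n 𝕜} {D : Ω → Matrix m p 𝕜}
    (hA : ∀ i j, Integrable (fun ω => A ω i j) μ) (hB : ∀ i j, Integrable (fun ω => B ω i j) μ)
    (hC : ∀ i j, Integrable (fun ω => C ω i j) μ) (hD : ∀ i j, Integrable (fun ω => D ω i j) μ) :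
    ∀ i j, Integrable (fun ω => fromBlocks (A ω) (B ω) (C ω) (D ω) i j) μ := by
  rintro (i | i) (j | j)
  exacts [hA i j, hB i j, hC i j, hD i j]

theorem conjTranspose_entrywiseIntegral (M : Ω → Matrix m n 𝕜) :
    (entrywiseIntegral μ M)ᴴ = entrywiseIntegral μ fun ω => (M ω)ᴴ := by
  ext i j
  simp [entrywiseIntegral, ← integral_conj]

theorem IsHermitian.entrywiseIntegral {M : Ω → Matrix n n 𝕜} (hM : ∀ ω, (M ω).IsHermitian) :
    (entrywiseIntegral μ M).IsHermitian := by
  simp_rw [IsHermitian, conjTranspose_entrywiseIntegral, fun ω => (hM ω).eq]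

variable [Fintype m] [Fintype n]

theorem integrable_dotProduct_mulVec {M : Ω → Matrix m n 𝕜}
    (hM : ∀ i j, Integrable (fun ω => M ω i j) μ) (x : m → 𝕜) (y : n → 𝕜) :
    Integrable (fun ω => x ⬝ᵥ M ω *ᵥ y) μ := by
  simp only [dotProduct, mulVec]
  exact integrable_finsetSum _ fun i _ =>
    (integrable_finsetSum _ fun j _ => (hM i j).mul_const (y j)).const_mul (x i)

theorem dotProduct_mulVec_entrywiseIntegral {M : Ω → Matrix m n 𝕜}
    (hM : ∀ i j, Integrable (fun ω => M ω i j) μ) (x : m → 𝕜) (y : n → 𝕜) :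
    x ⬝ᵥ entrywiseIntegral μ M *ᵥ y = ∫ ω, x ⬝ᵥ M ω *ᵥ y ∂μ := by
  simp only [dotProduct, mulVec, entrywiseIntegral, of_apply]
  rw [integral_finsetSum _ fun i _ =>
    (integrable_finsetSum _ fun j _ => (hM i j).mul_const (y j)).const_mul (x i)]
  refine Finset.sum_congr rfl fun i _ => ?_
  rw [integral_const_mul, integral_finsetSum _ fun j _ => (hM i j).mul_const (y j)]
  simp_rw [integral_mul_const]

theorem PosSemidef.entrywiseIntegral {M : Ω → Matrix n n 𝕜} (hM : ∀ ω, (M ω).PosSemidef)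
    (hint : ∀ i j, Integrable (fun ω => M ω i j) μ) :
    (entrywiseIntegral μ M).PosSemidef := by
  refine .of_dotProduct_mulVec_nonneg (.entrywiseIntegral fun ω => (hM ω).isHermitian)
    fun x => ?_
  rw [dotProduct_mulVec_entrywiseIntegral hint]
  exact integral_nonneg fun ω => (hM ω).dotProduct_mulVec_nonneg x

theorem PosDef.entrywiseIntegral [NeZero μ] {M : Ω → Matrix n n 𝕜} (hM : ∀ ω, (M ω).PosDef)
    (hint : ∀ i j, Integrable (fun ω => M ω i j) μ) :
    (entrywiseIntegral μ M).PosDef := by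
  refine .of_dotProduct_mulVec_pos (.entrywiseIntegral fun ω => (hM ω).isHermitian)
    fun x hx => ?_
  rw [dotProduct_mulVec_entrywiseIntegral hint]
  exact integral_pos_of_forall_pos (integrable_dotProduct_mulVec hint _ x)
    fun ω => (hM ω).dotProduct_mulVec_pos hx

theorem PosDef.posSemidef_fromBlocks_one_inv [DecidableEq n] {A : Matrix n n 𝕜} (hA : A.PosDef) :
    (fromBlocks A 1 1 A⁻¹).PosSemidef := by
  have : Invertible A⁻¹ := hA.inv.isUnit.invertible
  have hA_inv_inv : A⁻¹⁻¹ = A :=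
    nonsing_inv_nonsing_inv A ((isUnit_iff_isUnit_det A).mp hA.isUnit)
  simpa [hA_inv_inv] using
    (hA.inv.fromBlocks₂₂ A (1 : Matrix n n 𝕜)).mpr (by simp [hA_inv_inv, PosSemidef.zero])

end Matrix

end EntrywiseIntegral

open Matrix

theorem stmt17 {m : ℕ} {Ω : Type*} [MeasureTheory.MeasureSpace Ω]
    (μ : MeasureTheory.Measure Ω) [MeasureTheory.IsProbabilityMeasure μ]
    (X : Ω → Matrix (Fin m) (Fin m) ℂ) (hX : ∀ ω, (X ω).PosDef)
    (hint : ∀ i j : Fin m, MeasureTheory.Integrable (fun ω => X ω i j) μ)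
    (hint' : ∀ i j : Fin m, MeasureTheory.Integrable (fun ω => (X ω)⁻¹ i j) μ) :
    (Matrix.of (fun i j : Fin m => ∫ ω, X ω i j ∂μ) -
      (Matrix.of (fun i j : Fin m => ∫ ω, (X ω)⁻¹ i j ∂μ))⁻¹).PosSemidef := by
  change (entrywiseIntegral μ X - (entrywiseIntegral μ fun ω => (X ω)⁻¹)⁻¹).PosSemidef
  have hinv : (entrywiseIntegral μ fun ω => (X ω)⁻¹).PosDef :=
    .entrywiseIntegral (fun ω => (hX ω).inv) hint'
  have hblock := PosSemidef.entrywiseIntegral (μ := μ)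
    (fun ω => (hX ω).posSemidef_fromBlocks_one_inv)
    (integrable_fromBlocks_apply hint (fun _ _ => integrable_const _)
      (fun _ _ => integrable_const _) hint')
  rw [entrywiseIntegral_fromBlocks, entrywiseIntegral_const] at hblock
  have : Invertible (entrywiseIntegral μ fun ω => (X ω)⁻¹) := hinv.isUnit.invertible
  simpa using (hinv.fromBlocks₂₂ _ (1 : Matrix (Fin m) (Fin m) ℂ)).mp (by simpa using hblock)
end
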